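/- Let (C'•, d'), (C''•, d'') be finite-dimensional Hilbert cochain complexes with Laplacians Δ', Δ'', and let (C•, d) be their tensor product complex with Laplacians Δ_k = ⊕_{i+j=k} (Δ'_i ⊗ I + I ⊗ Δ''_j). Then for all t > 0: Σ_k (−1)^k k Tr(exp(−t Δ_k)) = (Σ_i (−1)^i Tr(exp(−t Δ'_i))) · (Σ_j (−1)^j j Tr(exp(−t Δ''_j))) + (Σ_j (−1)^j Tr(exp(−t Δ''_j))) · (Σ_i (−1)^i i Tr(exp(−t Δ'_i))). -/

import Mathlib

open scoped TensorProduct InnerProductSpace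

noncomputable section

/-! The induced inner product on the tensor product of two finite-dimensional complex inner
product spaces: it is characterized by `⟪a ⊗ b, c ⊗ d⟫ = ⟪a, c⟫ * ⟪b, d⟫`, and is here
constructed via the coordinates with respect to the tensor product of orthonormal bases of
the two factors. -/

section TensorInner

variable (E F : Type) [NormedAddCommGroup E] [InnerProductSpace ℂ E] [FiniteDimensional ℂ E]
  [NormedAddCommGroup F] [InnerProductSpace ℂ F] [FiniteDimensional ℂ F]

/-- Coordinates of `E ⊗[ℂ] F` with respect to the tensor product of orthonormal bases of the
two factors. -/
def tensorRepr :
    (E ⊗[ℂ] F) ≃ₗ[ℂ] (Fin (Module.finrank ℂ E) × Fin (Module.finrank ℂ F)) → ℂ :=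
  ((stdOrthonormalBasis ℂ E).toBasis.tensorProduct (stdOrthonormalBasis ℂ F).toBasis).equivFun

/-- The induced inner product on `E ⊗[ℂ] F`. -/
def tensorCore : InnerProductSpace.Core ℂ (E ⊗[ℂ] F) where
  inner x y := ∑ i, (starRingEnd ℂ) (tensorRepr E F x i) * tensorRepr E F y i
  conj_inner_symm x y := by
    simp only [map_sum, map_mul, Complex.conj_conj]
    exact Finset.sum_congr rfl fun i _ => mul_comm _ _
  re_inner_nonneg x := by
    simp only [map_sum]
    apply Finset.sum_nonneg
    intro i _
    rw [← Complex.normSq_eq_conj_mul_self]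
    simpa using Complex.normSq_nonneg _
  add_left x y z := by
    simp only [map_add, Pi.add_apply, add_mul, Finset.sum_add_distrib]
  smul_left x y r := by
    simp only [map_smul, Pi.smul_apply, smul_eq_mul, map_mul, Finset.mul_sum, mul_assoc]
  definite x hx := by
    have hx' : ∑ i, (starRingEnd ℂ) (tensorRepr E F x i) * tensorRepr E F x i = 0 := hx
    have h1 : ((∑ j, Complex.normSq (tensorRepr E F x j) : ℝ) : ℂ) = 0 := by
      rw [← hx']
      push_cast
      exact Finset.sum_congr rfl fun i _ => Complex.normSq_eq_conj_mul_self
    have h2 : ∑ j, Complex.normSq (tensorRepr E F x j) = 0 := by exact_mod_cast h1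
    have h3 := (Finset.sum_eq_zero_iff_of_nonneg
      (fun j _ => Complex.normSq_nonneg (tensorRepr E F x j))).1 h2
    have h4 : tensorRepr E F x = 0 :=
      funext fun j => Complex.normSq_eq_zero.1 (h3 j (Finset.mem_univ j))
    have h5 := congrArg (tensorRepr E F).symm h4
    simpa using h5

instance : NormedAddCommGroup (E ⊗[ℂ] F) :=
  @InnerProductSpace.Core.toNormedAddCommGroup ℂ _ _ _ _ (tensorCore E F)

instance : InnerProductSpace ℂ (E ⊗[ℂ] F) := InnerProductSpace.ofCore (tensorCore E F).toCore

end TensorInner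

/-- Laplacians `Δ_p = d_p* d_p + d_{p-1} d_{p-1}*` (convention `d_{-1} = 0`). -/
def Lap (C : ℕ → Type) [∀ p, NormedAddCommGroup (C p)]
    [∀ p, InnerProductSpace ℂ (C p)] [∀ p, FiniteDimensional ℂ (C p)]
    (d : ∀ p, C p →ₗ[ℂ] C (p + 1)) : ∀ p, C p →ₗ[ℂ] C p
  | 0 => LinearMap.adjoint (d 0) ∘ₗ d 0
  | (p + 1) => LinearMap.adjoint (d (p + 1)) ∘ₗ d (p + 1) + d p ∘ₗ LinearMap.adjoint (d p)

/-- `Tr (exp (-t T))`. -/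
def heatTr {E : Type} [NormedAddCommGroup E] [InnerProductSpace ℂ E]
    [FiniteDimensional ℂ E] (T : E →ₗ[ℂ] E) (t : ℝ) : ℂ :=
  LinearMap.trace ℂ E
    (NormedSpace.exp ((-(t : ℂ)) • LinearMap.toContinuousLinearMap T)).toLinearMap

section

variable (C₁ C₂ : ℕ → Type)
  [∀ i, NormedAddCommGroup (C₁ i)] [∀ i, InnerProductSpace ℂ (C₁ i)]
  [∀ i, FiniteDimensional ℂ (C₁ i)]
  [∀ j, NormedAddCommGroup (C₂ j)] [∀ j, InnerProductSpace ℂ (C₂ j)]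
  [∀ j, FiniteDimensional ℂ (C₂ j)]

/-- The degree-`k` space of the tensor product complex, `⊕_{i+j=k} C₁^i ⊗ C₂^j`
as an orthogonal direct sum. -/
abbrev TensorC (k : ℕ) : Type :=
  PiLp 2 (fun p : ↥(Finset.HasAntidiagonal.antidiagonal k) => C₁ p.1.1 ⊗[ℂ] C₂ p.1.2)

variable (d₁ : ∀ i, C₁ i →ₗ[ℂ] C₁ (i + 1)) (d₂ : ∀ j, C₂ j →ₗ[ℂ] C₂ (j + 1))

/-- The Laplacian of the tensor product complex in degree `k`:
`Δ_k = ⊕_{i+j=k} (Δ'_i ⊗ I + I ⊗ Δ''_j)`. -/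
def tensorLap (k : ℕ) : TensorC C₁ C₂ k →ₗ[ℂ] TensorC C₁ C₂ k :=
  ((WithLp.linearEquiv 2 ℂ
      (∀ p : ↥(Finset.HasAntidiagonal.antidiagonal k), C₁ p.1.1 ⊗[ℂ] C₂ p.1.2)).symm.toLinearMap) ∘ₗ
    (∑ p : ↥(Finset.HasAntidiagonal.antidiagonal k),
      LinearMap.single ℂ (fun q : ↥(Finset.HasAntidiagonal.antidiagonal k) => C₁ q.1.1 ⊗[ℂ] C₂ q.1.2) p ∘ₗ
        (TensorProduct.map (Lap C₁ d₁ p.1.1) LinearMap.id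
          + TensorProduct.map LinearMap.id (Lap C₂ d₂ p.1.2)) ∘ₗ
        LinearMap.proj p) ∘ₗ
    (WithLp.linearEquiv 2 ℂ
      (∀ p : ↥(Finset.HasAntidiagonal.antidiagonal k), C₁ p.1.1 ⊗[ℂ] C₂ p.1.2)).toLinearMap

end

/-!
The Laplacian `Δ_k` of the tensor product complex is block diagonal with the Kronecker sums
`Δ'_i ⊗ 1 + 1 ⊗ Δ''_j`, `i + j = k`, as blocks. The two summands of a Kronecker sum commute, so
its heat operator is `e^{-tΔ'_i} ⊗ e^{-tΔ''_j}`, whence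
`Tr e^{-tΔ_k} = ∑_{i+j=k} Tr e^{-tΔ'_i} · Tr e^{-tΔ''_j}`. The weighted alternating sum of this
convolution is the Leibniz rule for `X d/dX` at `X = -1`, applied to the product of the
polynomials `∑ Tr e^{-tΔ'_i} Xⁱ` and `∑ Tr e^{-tΔ''_j} Xʲ`.
-/

open NormedSpace Finset

theorem AlgHom.map_exp_of_finiteDimensional {A B : Type*} [NormedRing A] [NormedAlgebra ℂ A]
    [FiniteDimensional ℂ A] [NormedRing B] [NormedAlgebra ℂ B] (φ : A →ₐ[ℂ] B) (a : A) :
    φ (exp a) = exp (φ a) :=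
  haveI := FiniteDimensional.complete ℂ A
  map_exp_of_mem_ball φ φ.toLinearMap.continuous_of_finiteDimensional a
    ((expSeries_radius_eq_top ℂ A).symm ▸ edist_lt_top _ _)

/- `NormedSpace.exp_add_of_commute` asks for a `NormedAlgebra ℚ` structure, which is not
inferred from the `ℂ`-algebra structure. -/
theorem Commute.exp_add {A : Type*} [NormedRing A] [NormedAlgebra ℂ A] [CompleteSpace A]
    {a b : A} (h : Commute a b) :
    NormedSpace.exp (a + b) = NormedSpace.exp a * NormedSpace.exp b :=
  exp_add_of_commute_of_mem_ball h ((expSeries_radius_eq_top ℂ A).symm ▸ edist_lt_top _ _)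
    ((expSeries_radius_eq_top ℂ A).symm ▸ edist_lt_top _ _)

theorem LinearMap.sum_single_comp_comp_proj {R ι : Type*} [Semiring R] [Fintype ι] [DecidableEq ι]
    {M N : ι → Type*} [∀ i, AddCommMonoid (M i)] [∀ i, Module R (M i)]
    [∀ i, AddCommMonoid (N i)] [∀ i, Module R (N i)] (f : ∀ i, M i →ₗ[R] N i) :
    ∑ i, LinearMap.single R N i ∘ₗ f i ∘ₗ LinearMap.proj i = LinearMap.piMap f := by
  ext x j
  simp

theorem LinearMap.trace_piMap {R ι : Type*} [CommRing R] [Fintype ι] [DecidableEq ι]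
    {M : ι → Type*} [∀ i, AddCommGroup (M i)] [∀ i, Module R (M i)] [∀ i, Module.Free R (M i)]
    [∀ i, Module.Finite R (M i)] (f : ∀ i, Module.End R (M i)) :
    LinearMap.trace R (∀ i, M i) (LinearMap.piMap f) = ∑ i, LinearMap.trace R (M i) (f i) := by
  rw [← LinearMap.sum_single_comp_comp_proj, map_sum]
  refine sum_congr rfl fun i _ => ?_
  rw [LinearMap.trace_comp_comm', LinearMap.comp_assoc, LinearMap.proj_comp_single_same,
    LinearMap.comp_id]

namespace Finset

theorem sum_range_sum_antidiagonal_eq_sum_range_sum_range {M : Type*} [AddCommMonoid M]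
    {m n : ℕ} (g : ℕ → ℕ → M) (hg : ∀ i j, m < i ∨ n < j → g i j = 0) :
    ∑ k ∈ range (m + n + 1), ∑ p ∈ antidiagonal k, g p.1 p.2 =
      ∑ i ∈ range (m + 1), ∑ j ∈ range (n + 1), g i j := by
  rw [← sum_product', ← sum_fiberwise_of_maps_to (s := range (m + 1) ×ˢ range (n + 1))
    (t := range (m + n + 1)) (g := fun p => p.1 + p.2)
    (fun p hp => by simp only [mem_product, mem_range] at hp ⊢; omega)]
  refine sum_congr rfl fun k _ => (sum_subset (fun p hp => ?_) fun p hp hp' => ?_).symm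
  · exact HasAntidiagonal.mem_antidiagonal.2 (mem_filter.1 hp).2
  · simp only [mem_filter, mem_product, mem_range, HasAntidiagonal.mem_antidiagonal] at hp hp'
    exact hg _ _ (by omega)

theorem sum_range_neg_one_pow_mul_mul_sum_antidiagonal {R : Type*} [CommRing R] {m n : ℕ}
    (a b : ℕ → R) (ha : ∀ i, m < i → a i = 0) (hb : ∀ j, n < j → b j = 0) :
    ∑ k ∈ range (m + n + 1), (-1 : R) ^ k * k * ∑ p ∈ antidiagonal k, a p.1 * b p.2 =
      (∑ i ∈ range (m + 1), (-1 : R) ^ i * a i) *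
          (∑ j ∈ range (n + 1), (-1 : R) ^ j * j * b j) +
        (∑ j ∈ range (n + 1), (-1 : R) ^ j * b j) *
          (∑ i ∈ range (m + 1), (-1 : R) ^ i * i * a i) := by
  have hweight : ∀ k, (-1 : R) ^ k * k * ∑ p ∈ antidiagonal k, a p.1 * b p.2 =
      ∑ p ∈ antidiagonal k, (-1 : R) ^ (p.1 + p.2) * ((p.1 + p.2 : ℕ) : R) * (a p.1 * b p.2) :=
    fun k => by
      rw [mul_sum]
      exact sum_congr rfl fun p hp => by rw [HasAntidiagonal.mem_antidiagonal.1 hp]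
  simp only [hweight]
  rw [sum_range_sum_antidiagonal_eq_sum_range_sum_range
      (fun i j => (-1 : R) ^ (i + j) * ((i + j : ℕ) : R) * (a i * b j)) fun i j h => by
      rcases h with h | h <;> simp [ha, hb, h],
    sum_mul_sum, sum_mul_sum, sum_comm (s := range (n + 1)), ← sum_add_distrib]
  refine sum_congr rfl fun i _ => ?_
  rw [← sum_add_distrib]
  refine sum_congr rfl fun j _ => ?_
  push_cast
  ring

end Finset

theorem heatTr_of_finrank_eq_zero {E : Type} [NormedAddCommGroup E] [InnerProductSpace ℂ E]
    [FiniteDimensional ℂ E] (T : Module.End ℂ E) (t : ℝ) (h : Module.finrank ℂ E = 0) :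
    heatTr T t = 0 := by
  have := Module.finrank_zero_iff.mp h
  rw [heatTr, Subsingleton.elim (LinearMap.trace ℂ E) 0]
  rfl

section KroneckerSum

variable (E F : Type) [NormedAddCommGroup E] [InnerProductSpace ℂ E] [FiniteDimensional ℂ E]
  [NormedAddCommGroup F] [InnerProductSpace ℂ F] [FiniteDimensional ℂ F]

def rTensorCLM : (E →L[ℂ] E) →ₐ[ℂ] (E ⊗[ℂ] F →L[ℂ] E ⊗[ℂ] F) :=
  (Module.End.toContinuousLinearMap (E ⊗[ℂ] F)).toAlgHom.comp
    ((Module.End.rTensorAlgHom ℂ E F).comp (Module.End.toContinuousLinearMap E).symm.toAlgHom)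

def lTensorCLM : (F →L[ℂ] F) →ₐ[ℂ] (E ⊗[ℂ] F →L[ℂ] E ⊗[ℂ] F) :=
  (Module.End.toContinuousLinearMap (E ⊗[ℂ] F)).toAlgHom.comp
    ((Module.End.lTensorAlgHom ℂ F E).comp (Module.End.toContinuousLinearMap F).symm.toAlgHom)

theorem rTensorCLM_mul_lTensorCLM (a : E →L[ℂ] E) (b : F →L[ℂ] F) :
    (rTensorCLM E F a * lTensorCLM E F b).toLinearMap =
      TensorProduct.map a.toLinearMap b.toLinearMap :=
  LinearMap.rTensor_comp_lTensor (M := E) _ _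

theorem commute_rTensorCLM_lTensorCLM (a : E →L[ℂ] E) (b : F →L[ℂ] F) :
    Commute (rTensorCLM E F a) (lTensorCLM E F b) :=
  ContinuousLinearMap.coe_injective <|
    (LinearMap.rTensor_comp_lTensor (M := E) _ _).trans
      (LinearMap.lTensor_comp_rTensor (M := E) _ _).symm

variable {E F}

theorem heatTr_rTensor_add_lTensor (S : Module.End ℂ E) (T : Module.End ℂ F) (t : ℝ) :
    heatTr (S.rTensor F + T.lTensor E) t = heatTr S t * heatTr T t := by
  have hsplit : (-(t : ℂ)) • LinearMap.toContinuousLinearMap (S.rTensor F + T.lTensor E) =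
      rTensorCLM E F ((-(t : ℂ)) • LinearMap.toContinuousLinearMap S) +
        lTensorCLM E F ((-(t : ℂ)) • LinearMap.toContinuousLinearMap T) := by
    rw [(rTensorCLM E F).map_smul_of_tower, (lTensorCLM E F).map_smul_of_tower]
    exact smul_add (-(t : ℂ)) (rTensorCLM E F (LinearMap.toContinuousLinearMap S))
      (lTensorCLM E F (LinearMap.toContinuousLinearMap T))
  rw [heatTr, hsplit, Commute.exp_add (commute_rTensorCLM_lTensorCLM E F _ _),
    ← AlgHom.map_exp_of_finiteDimensional, ← AlgHom.map_exp_of_finiteDimensional,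
    rTensorCLM_mul_lTensorCLM, LinearMap.trace_tensorProduct']
  rfl

end KroneckerSum

section BlockDiagonal

variable {ι : Type} [Fintype ι] [DecidableEq ι] {M : ι → Type}
  [∀ i, NormedAddCommGroup (M i)] [∀ i, InnerProductSpace ℂ (M i)]
  [∀ i, FiniteDimensional ℂ (M i)]

variable (M) in
def blockDiagCLM : (∀ i, M i →L[ℂ] M i) →ₐ[ℂ] (PiLp 2 M →L[ℂ] PiLp 2 M) where
  toFun f := LinearMap.toContinuousLinearMap
    ((WithLp.linearEquiv 2 ℂ (∀ i, M i)).symm.conj (LinearMap.piMap fun i => (f i).toLinearMap))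
  map_one' := by ext; rfl
  map_mul' _ _ := by ext; rfl
  map_zero' := by ext; rfl
  map_add' _ _ := by ext; rfl
  commutes' _ := by ext; rfl

theorem trace_blockDiagCLM (f : ∀ i, M i →L[ℂ] M i) :
    LinearMap.trace ℂ (PiLp 2 M) (blockDiagCLM M f).toLinearMap =
      ∑ i, LinearMap.trace ℂ (M i) (f i).toLinearMap :=
  (LinearMap.trace_conj' _ _).trans (LinearMap.trace_piMap _)

theorem heatTr_eq_sum_of_eq_blockDiagCLM {T : Module.End ℂ (PiLp 2 M)}
    {B : ∀ i, Module.End ℂ (M i)}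
    (hT : LinearMap.toContinuousLinearMap T =
      blockDiagCLM M fun i => LinearMap.toContinuousLinearMap (B i)) (t : ℝ) :
    heatTr T t = ∑ i, heatTr (B i) t := by
  rw [heatTr, hT, ← (blockDiagCLM M).map_smul_of_tower,
    ← AlgHom.map_exp_of_finiteDimensional, trace_blockDiagCLM]
  refine sum_congr rfl fun i _ => ?_
  rw [← Pi.evalAlgHom_apply ℂ (fun i => M i →L[ℂ] M i) i (exp _),
    AlgHom.map_exp_of_finiteDimensional]
  rfl

end BlockDiagonal

theorem heatTr_tensorLap {C₁ C₂ : ℕ → Type}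
    [∀ i, NormedAddCommGroup (C₁ i)] [∀ i, InnerProductSpace ℂ (C₁ i)]
    [∀ i, FiniteDimensional ℂ (C₁ i)]
    [∀ j, NormedAddCommGroup (C₂ j)] [∀ j, InnerProductSpace ℂ (C₂ j)]
    [∀ j, FiniteDimensional ℂ (C₂ j)]
    (d₁ : ∀ i, C₁ i →ₗ[ℂ] C₁ (i + 1)) (d₂ : ∀ j, C₂ j →ₗ[ℂ] C₂ (j + 1)) (k : ℕ) (t : ℝ) :
    heatTr (tensorLap C₁ C₂ d₁ d₂ k) t =
      ∑ p ∈ antidiagonal k, heatTr (Lap C₁ d₁ p.1) t * heatTr (Lap C₂ d₂ p.2) t := by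
  rw [heatTr_eq_sum_of_eq_blockDiagCLM
      (B := fun p => (Lap C₁ d₁ p.1.1).rTensor _ + (Lap C₂ d₂ p.1.2).lTensor _)
      (by rw [tensorLap, LinearMap.sum_single_comp_comp_proj]; rfl),
    ← sum_coe_sort (antidiagonal k)]
  exact sum_congr rfl fun (p : antidiagonal k) _ =>
    heatTr_rTensor_add_lTensor (Lap C₁ d₁ p.1.1) (Lap C₂ d₂ p.1.2) t

theorem tensor_weighted_heat_trace_general
    (n₁ n₂ : ℕ) (C₁ C₂ : ℕ → Type)
    [∀ i, NormedAddCommGroup (C₁ i)] [∀ i, InnerProductSpace ℂ (C₁ i)]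
    [∀ i, FiniteDimensional ℂ (C₁ i)]
    [∀ j, NormedAddCommGroup (C₂ j)] [∀ j, InnerProductSpace ℂ (C₂ j)]
    [∀ j, FiniteDimensional ℂ (C₂ j)]
    (d₁ : ∀ i, C₁ i →ₗ[ℂ] C₁ (i + 1)) (d₂ : ∀ j, C₂ j →ₗ[ℂ] C₂ (j + 1))
    (htriv₁ : ∀ i, n₁ < i → Module.finrank ℂ (C₁ i) = 0)
    (htriv₂ : ∀ j, n₂ < j → Module.finrank ℂ (C₂ j) = 0)
    (t : ℝ) :
    ∑ k ∈ Finset.range (n₁ + n₂ + 1),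
        (-1 : ℂ) ^ k * (k : ℂ) * heatTr (E := TensorC C₁ C₂ k) (tensorLap C₁ C₂ d₁ d₂ k) t =
      (∑ i ∈ Finset.range (n₁ + 1), (-1 : ℂ) ^ i * heatTr (Lap C₁ d₁ i) t) *
          (∑ j ∈ Finset.range (n₂ + 1), (-1 : ℂ) ^ j * (j : ℂ) * heatTr (Lap C₂ d₂ j) t) +
        (∑ j ∈ Finset.range (n₂ + 1), (-1 : ℂ) ^ j * heatTr (Lap C₂ d₂ j) t) *
          (∑ i ∈ Finset.range (n₁ + 1), (-1 : ℂ) ^ i * (i : ℂ) * heatTr (Lap C₁ d₁ i) t) := by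
  rw [sum_congr rfl fun k _ => by rw [heatTr_tensorLap d₁ d₂ k t]]
  exact sum_range_neg_one_pow_mul_mul_sum_antidiagonal (fun i => heatTr (Lap C₁ d₁ i) t)
    (fun j => heatTr (Lap C₂ d₂ j) t)
    (fun i hi => heatTr_of_finrank_eq_zero _ t (htriv₁ i hi))
    (fun j hj => heatTr_of_finrank_eq_zero _ t (htriv₂ j hj))

/-- for the tensor product of two finite-dimensional Hilbert cochain complexes
(the tensor factors carrying the induced inner products), for all `t > 0`:
`Σ_k (-1)^k k Tr e^{-tΔ_k} = (Σ_i (-1)^i Tr e^{-tΔ'_i})(Σ_j (-1)^j j Tr e^{-tΔ''_j})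
 + (Σ_j (-1)^j Tr e^{-tΔ''_j})(Σ_i (-1)^i i Tr e^{-tΔ'_i})`. -/
theorem tensor_weighted_heat_trace
    (n₁ n₂ : ℕ) (C₁ C₂ : ℕ → Type)
    [∀ i, NormedAddCommGroup (C₁ i)] [∀ i, InnerProductSpace ℂ (C₁ i)]
    [∀ i, FiniteDimensional ℂ (C₁ i)]
    [∀ j, NormedAddCommGroup (C₂ j)] [∀ j, InnerProductSpace ℂ (C₂ j)]
    [∀ j, FiniteDimensional ℂ (C₂ j)]
    (d₁ : ∀ i, C₁ i →ₗ[ℂ] C₁ (i + 1)) (d₂ : ∀ j, C₂ j →ₗ[ℂ] C₂ (j + 1))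
    (hd₁ : ∀ i, d₁ (i + 1) ∘ₗ d₁ i = 0) (hd₂ : ∀ j, d₂ (j + 1) ∘ₗ d₂ j = 0)
    (htriv₁ : ∀ i, n₁ < i → Module.finrank ℂ (C₁ i) = 0)
    (htriv₂ : ∀ j, n₂ < j → Module.finrank ℂ (C₂ j) = 0)
    (t : ℝ) (ht : 0 < t) :
    ∑ k ∈ Finset.range (n₁ + n₂ + 1),
        (-1 : ℂ) ^ k * (k : ℂ) * heatTr (E := TensorC C₁ C₂ k) (tensorLap C₁ C₂ d₁ d₂ k) t =
      (∑ i ∈ Finset.range (n₁ + 1), (-1 : ℂ) ^ i * heatTr (Lap C₁ d₁ i) t) *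
          (∑ j ∈ Finset.range (n₂ + 1), (-1 : ℂ) ^ j * (j : ℂ) * heatTr (Lap C₂ d₂ j) t) +
        (∑ j ∈ Finset.range (n₂ + 1), (-1 : ℂ) ^ j * heatTr (Lap C₂ d₂ j) t) *
          (∑ i ∈ Finset.range (n₁ + 1), (-1 : ℂ) ^ i * (i : ℂ) * heatTr (Lap C₁ d₁ i) t) :=
  tensor_weighted_heat_trace_general n₁ n₂ C₁ C₂ d₁ d₂ htriv₁ htriv₂ t
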